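/- The matrices M and M_D have the same characteristic polynomial; in particular, det(λI − M) = det(λI − M_D) for all λ, and M and M_D have the same eigenvalues. -/
import Mathlib


open Matrix

/-- The block matrix `[[A, I, 0], [0, A, −g], [−gᵀ, 0ᵀ, 0]]`. -/
noncomputable def MAmat {n : ℕ} (A : Matrix (Fin n) (Fin n) ℝ) (g : Fin n → ℝ) :
    Matrix (Fin n ⊕ Fin n ⊕ Unit) (Fin n ⊕ Fin n ⊕ Unit) ℝ :=
  Matrix.of fun i j =>
    match i, j with
    | Sum.inl i, Sum.inl j => A i j
    | Sum.inl i, Sum.inr (Sum.inl j) => if i = j then 1 else 0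
    | Sum.inl _, Sum.inr (Sum.inr _) => 0
    | Sum.inr (Sum.inl _), Sum.inl _ => 0
    | Sum.inr (Sum.inl i), Sum.inr (Sum.inl j) => A i j
    | Sum.inr (Sum.inl i), Sum.inr (Sum.inr _) => -g i
    | Sum.inr (Sum.inr _), Sum.inl j => -g j
    | Sum.inr (Sum.inr _), Sum.inr _ => 0

/-- The block matrix `M = [[D, −diag(b), 0], [0, D, −b], [𝟙ᵀ, 0ᵀ, 0]]`. -/
noncomputable def Mmat {n : ℕ} (D b : Fin n → ℝ) :
    Matrix (Fin n ⊕ Fin n ⊕ Unit) (Fin n ⊕ Fin n ⊕ Unit) ℝ :=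
  Matrix.of fun i j =>
    match i, j with
    | Sum.inl i, Sum.inl j => if i = j then D i else 0
    | Sum.inl i, Sum.inr (Sum.inl j) => if i = j then -b i else 0
    | Sum.inl _, Sum.inr (Sum.inr _) => 0
    | Sum.inr (Sum.inl _), Sum.inl _ => 0
    | Sum.inr (Sum.inl i), Sum.inr (Sum.inl j) => if i = j then D i else 0
    | Sum.inr (Sum.inl i), Sum.inr (Sum.inr _) => -b i
    | Sum.inr (Sum.inr _), Sum.inl _ => 1
    | Sum.inr (Sum.inr _), Sum.inr _ => 0

-- conjugation identity when all b i ≠ 0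
lemma conj_eq {n : ℕ} (D b : Fin n → ℝ) (hb : ∀ i, b i ≠ 0) :
    MAmat (Matrix.diagonal D) b =
      Matrix.diagonal (Sum.elim (fun i => -(b i)⁻¹) (fun _ => 1)) * Mmat D b *
        Matrix.diagonal (Sum.elim (fun i => -(b i)) (fun _ => 1)) := by
  ext i j
  rw [Matrix.mul_diagonal, Matrix.diagonal_mul]
  rcases i with i | i | i <;> rcases j with j | j | j <;>
    simp [MAmat, Mmat, Matrix.diagonal_apply] <;>
    rcases eq_or_ne i j with h | h <;>
    simp [h] <;> field_simp [hb]

lemma det_eq_of_ne {n : ℕ} (D b : Fin n → ℝ) (hb : ∀ i, b i ≠ 0) (lam : ℝ) :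
    (lam • (1 : Matrix (Fin n ⊕ Fin n ⊕ Unit) (Fin n ⊕ Fin n ⊕ Unit) ℝ) - Mmat D b).det
      = (lam • (1 : Matrix (Fin n ⊕ Fin n ⊕ Unit) (Fin n ⊕ Fin n ⊕ Unit) ℝ)
          - MAmat (Matrix.diagonal D) b).det := by
  set S := Matrix.diagonal (Sum.elim (fun i => -(b i)⁻¹) (fun _ : Fin n ⊕ Unit => (1:ℝ)))
  set S' := Matrix.diagonal (Sum.elim (fun i => -(b i)) (fun _ : Fin n ⊕ Unit => (1:ℝ)))
  have hSS' : S * S' = 1 := by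
    rw [Matrix.diagonal_mul_diagonal]
    ext i j
    rcases eq_or_ne i j with rfl | h
    · rcases i with i | i <;> simp [Matrix.one_apply, inv_mul_cancel₀ (hb _)]
    · simp [Matrix.diagonal_apply_ne _ h, Matrix.one_apply, h]
  have key : lam • (1 : Matrix (Fin n ⊕ Fin n ⊕ Unit) (Fin n ⊕ Fin n ⊕ Unit) ℝ)
      - MAmat (Matrix.diagonal D) b
      = S * (lam • (1 : Matrix (Fin n ⊕ Fin n ⊕ Unit) (Fin n ⊕ Fin n ⊕ Unit) ℝ)
          - Mmat D b) * S' := by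
    rw [conj_eq D b hb, Matrix.mul_sub, Matrix.sub_mul, Matrix.mul_smul, Matrix.mul_one,
      Matrix.smul_mul, hSS']
  rw [key, Matrix.det_mul, Matrix.det_mul]
  have h1 : S.det * S'.det = 1 := by rw [← Matrix.det_mul, hSS', Matrix.det_one]
  linear_combination (-(lam • (1 : Matrix (Fin n ⊕ Fin n ⊕ Unit) (Fin n ⊕ Fin n ⊕ Unit) ℝ)
    - Mmat D b).det) * h1

lemma cont_Mmat {n : ℕ} (D : Fin n → ℝ) (lam : ℝ) :
    Continuous fun c : Fin n → ℝ =>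
      (lam • (1 : Matrix (Fin n ⊕ Fin n ⊕ Unit) (Fin n ⊕ Fin n ⊕ Unit) ℝ) - Mmat D c).det := by
  apply Continuous.matrix_det
  apply Continuous.sub continuous_const
  apply continuous_matrix
  intro i j
  rcases i with i | i | i <;> rcases j with j | j | j <;>
    simp only [Mmat, Matrix.of_apply] <;> first
      | exact continuous_const
      | (by_cases h : i = j <;> simp [h] <;> fun_prop)
      | fun_prop

lemma cont_MAmat {n : ℕ} (D : Fin n → ℝ) (lam : ℝ) :
    Continuous fun c : Fin n → ℝ =>
      (lam • (1 : Matrix (Fin n ⊕ Fin n ⊕ Unit) (Fin n ⊕ Fin n ⊕ Unit) ℝ)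
        - MAmat (Matrix.diagonal D) c).det := by
  apply Continuous.matrix_det
  apply Continuous.sub continuous_const
  apply continuous_matrix
  intro i j
  rcases i with i | i | i <;> rcases j with j | j | j <;>
    simp only [MAmat, Matrix.of_apply] <;> first
      | exact continuous_const
      | fun_prop

lemma det_eq_all {n : ℕ} (D b : Fin n → ℝ) (lam : ℝ) :
    (lam • (1 : Matrix (Fin n ⊕ Fin n ⊕ Unit) (Fin n ⊕ Fin n ⊕ Unit) ℝ) - Mmat D b).det
      = (lam • (1 : Matrix (Fin n ⊕ Fin n ⊕ Unit) (Fin n ⊕ Fin n ⊕ Unit) ℝ)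
          - MAmat (Matrix.diagonal D) b).det := by
  set F : (Fin n → ℝ) → ℝ := fun c =>
    (lam • (1 : Matrix (Fin n ⊕ Fin n ⊕ Unit) (Fin n ⊕ Fin n ⊕ Unit) ℝ) - Mmat D c).det
      - (lam • (1 : Matrix (Fin n ⊕ Fin n ⊕ Unit) (Fin n ⊕ Fin n ⊕ Unit) ℝ)
          - MAmat (Matrix.diagonal D) c).det with hF
  have hFc : Continuous F := (cont_Mmat D lam).sub (cont_MAmat D lam)
  set c : ℝ → (Fin n → ℝ) := fun t i => if b i = 0 then t else b i with hc
  have hcc : Continuous c := by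
    apply continuous_pi
    intro i
    by_cases h : b i = 0 <;> simp [hc, h] <;> fun_prop
  have hc0 : c 0 = b := by funext i; by_cases h : b i = 0 <;> simp [hc, h]
  have hzero : ∀ t : ℝ, t ≠ 0 → F (c t) = 0 := by
    intro t ht
    have : ∀ i, (c t) i ≠ 0 := by
      intro i; by_cases h : b i = 0 <;> simp [hc, h, ht]
    simpa [hF, sub_eq_zero] using det_eq_of_ne D (c t) this lam
  have h1 : Filter.Tendsto (F ∘ c) (nhdsWithin 0 {(0:ℝ)}ᶜ) (nhds (F b)) := by
    have := (hFc.comp hcc).tendsto 0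
    rw [Function.comp_apply, hc0] at this
    exact this.mono_left nhdsWithin_le_nhds
  have h2 : Filter.Tendsto (F ∘ c) (nhdsWithin 0 {(0:ℝ)}ᶜ) (nhds 0) := by
    apply Filter.Tendsto.congr' _ tendsto_const_nhds
    filter_upwards [self_mem_nhdsWithin] with t ht
    exact (hzero t ht).symm
  have : F b = 0 := tendsto_nhds_unique h1 h2
  have h3 : F b = (lam • (1 : Matrix (Fin n ⊕ Fin n ⊕ Unit) (Fin n ⊕ Fin n ⊕ Unit) ℝ)
      - Mmat D b).det
    - (lam • (1 : Matrix (Fin n ⊕ Fin n ⊕ Unit) (Fin n ⊕ Fin n ⊕ Unit) ℝ)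
      - MAmat (Matrix.diagonal D) b).det := rfl
  rw [h3] at this
  linarith

lemma eval_cp {m : Type*} [Fintype m] [DecidableEq m] (M : Matrix m m ℝ) (lam : ℝ) :
    M.charpoly.eval lam = (lam • (1 : Matrix m m ℝ) - M).det := by
  rw [Matrix.charpoly, ← Polynomial.coe_evalRingHom, RingHom.map_det]
  congr 1
  ext i j
  by_cases h : i = j <;>
    simp [Matrix.charmatrix_apply, Matrix.one_apply, h, Matrix.smul_apply]

theorem stmt16 {n : ℕ} (hn : 0 < n) (D b : Fin n → ℝ) :
    (Mmat D b).charpoly = (MAmat (Matrix.diagonal D) b).charpoly ∧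
      (∀ lam : ℝ,
        (lam • (1 : Matrix (Fin n ⊕ Fin n ⊕ Unit) (Fin n ⊕ Fin n ⊕ Unit) ℝ)
            - Mmat D b).det
          = (lam • (1 : Matrix (Fin n ⊕ Fin n ⊕ Unit) (Fin n ⊕ Fin n ⊕ Unit) ℝ)
            - MAmat (Matrix.diagonal D) b).det) ∧
      ∀ lam : ℝ,
        (∃ v : Fin n ⊕ Fin n ⊕ Unit → ℝ, v ≠ 0 ∧ Mmat D b *ᵥ v = lam • v) ↔
        (∃ v : Fin n ⊕ Fin n ⊕ Unit → ℝ, v ≠ 0 ∧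
          MAmat (Matrix.diagonal D) b *ᵥ v = lam • v) := by
  have hdet := det_eq_all D b
  refine ⟨?_, hdet, ?_⟩
  · apply Polynomial.funext
    intro x
    rw [eval_cp, eval_cp]
    exact hdet x
  · intro lam
    have key : ∀ M : Matrix (Fin n ⊕ Fin n ⊕ Unit) (Fin n ⊕ Fin n ⊕ Unit) ℝ,
        (∃ v, v ≠ 0 ∧ M *ᵥ v = lam • v) ↔
          (lam • (1 : Matrix (Fin n ⊕ Fin n ⊕ Unit) (Fin n ⊕ Fin n ⊕ Unit) ℝ) - M).det = 0 := by
      intro M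
      rw [← Matrix.exists_mulVec_eq_zero_iff]
      apply exists_congr
      intro v
      apply and_congr_right
      intro _
      rw [Matrix.sub_mulVec, Matrix.smul_mulVec, Matrix.one_mulVec, sub_eq_zero, eq_comm]
    rw [key, key, hdet lam]
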